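/- arXiv:2405.03837 — 2 statements merged into one kernel-verified Lean document; each statement's English description precedes it below -/
import Mathlib

section
/- Let G = ℤ_m * ℤ_n be the free product of cyclic groups with generators s (order m) and t (order n). In the group algebra ℂ[G], set p = (1/m)∑_{i<m} s^i and q = (1/n)∑_{j<n} t^j. Then the delocalised trace of the element 1 - p - q with respect to the trivial conjugacy class is 1 - 1/m - 1/n; with respect to the conjugacy class of a nontrivial g ∈ ℤ_m it is -|⟨g⟩|/m; with respect to that of a nontrivial g ∈ ℤ_n it is -|⟨g⟩|/n; and it is 0 for all other conjugacy classes. -/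
open scoped Monoid.Coprod Classical

/-- The delocalised trace of a finitely supported element of `ℂ[G]` with respect to the
conjugacy class of `g`: the (finite) sum of its coefficients over the conjugacy class. -/
noncomputable def delocTraceFin {G : Type*} [Group G] (g : G) (f : MonoidAlgebra ℂ G) : ℂ :=
  ∑ h ∈ f.coeff.support.filter (fun h => IsConj g h), f.coeff h

lemma key_sum_gen {G : Type*} [Group G] (m : ℕ) [NeZero m]
    (φ : Multiplicative (ZMod m) →* G) (hφ : Function.Injective φ) (h : G) :
    (∑ i ∈ Finset.range m, MonoidAlgebra.of ℂ G (φ (Multiplicative.ofAdd (1 : ZMod m)) ^ i)).coeff h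
      = if ∃ a, h = φ a then 1 else 0 := by
  have hs : ∀ i : ℕ, φ (Multiplicative.ofAdd (1 : ZMod m)) ^ i
      = φ (Multiplicative.ofAdd ((i : ZMod m))) := by
    intro i
    rw [← map_pow]
    congr 1
    rw [← ofAdd_nsmul]
    congr 1
    simp [nsmul_eq_mul]
  have hL : (∑ i ∈ Finset.range m, MonoidAlgebra.of ℂ G (φ (Multiplicative.ofAdd (1 : ZMod m)) ^ i)).coeff h
      = ∑ i ∈ Finset.range m,
          (if φ (Multiplicative.ofAdd ((i : ZMod m))) = h then (1 : ℂ) else 0) := by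
    rw [MonoidAlgebra.coeff_sum, Finset.sum_apply']
    refine Finset.sum_congr rfl fun i _ => ?_
    rw [hs i, MonoidAlgebra.of_apply, MonoidAlgebra.coeff_single, Finsupp.single_apply]
  rw [hL]
  by_cases hA : ∃ a, h = φ a
  · obtain ⟨a, rfl⟩ := hA
    rw [if_pos ⟨a, rfl⟩]
    have hcond : ∀ i ∈ Finset.range m,
        (if φ (Multiplicative.ofAdd ((i : ZMod m))) = φ a then (1 : ℂ) else 0)
          = if i = (Multiplicative.toAdd a).val then 1 else 0 := by
      intro i hi
      congr 1
      simp only [eq_iff_iff]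
      constructor
      · intro hEq
        have h2 : Multiplicative.ofAdd ((i : ZMod m)) = a := hφ hEq
        have h3 : (i : ZMod m) = Multiplicative.toAdd a := by
          rw [← h2]; rfl
        have := ZMod.val_cast_of_lt (Finset.mem_range.mp hi)
        rw [← this, h3]
      · rintro rfl
        congr 1
        rw [ZMod.natCast_val, ZMod.cast_id]
        rfl
    rw [Finset.sum_congr rfl hcond, Finset.sum_ite_eq' (Finset.range m)]
    rw [if_pos (Finset.mem_range.mpr (ZMod.val_lt _))]
  · rw [if_neg hA]
    refine Finset.sum_eq_zero fun i _ => ?_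
    rw [if_neg]
    intro hEq
    exact hA ⟨_, hEq.symm⟩

/-- For `G = ℤ_m ∗ ℤ_n` with generators `s, t` of orders `m ≥ 2`, `n ≥ 3`, and
`p = (1/m)∑_{i<m} s^i`, `q = (1/n)∑_{j<n} t^j` in `ℂ[G]`, the delocalised traces of
`1 - p - q` are: `1 - 1/m - 1/n` at the trivial class; `-|⟨g⟩|/m` at the class of a
nontrivial `g ∈ ℤ_m` (where `|⟨g⟩|` counts the conjugates of `g` lying in `ℤ_m`);
`-|⟨g⟩|/n` at the class of a nontrivial `g ∈ ℤ_n`; and `0` at every other class. -/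
theorem delocTrace_of_higher_kazhdan_class (m n : ℕ) [NeZero m] [NeZero n]
    (hm : 2 ≤ m) (hn : 3 ≤ n) :
    ∀ (s t : Multiplicative (ZMod m) ∗ Multiplicative (ZMod n)),
    s = Monoid.Coprod.inl (Multiplicative.ofAdd (1 : ZMod m)) →
    t = Monoid.Coprod.inr (Multiplicative.ofAdd (1 : ZMod n)) →
    ∀ (x : MonoidAlgebra ℂ (Multiplicative (ZMod m) ∗ Multiplicative (ZMod n))),
    x = 1 - ((m : ℂ))⁻¹ • ∑ i ∈ Finset.range m, MonoidAlgebra.of ℂ _ (s ^ i)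
          - ((n : ℂ))⁻¹ • ∑ j ∈ Finset.range n, MonoidAlgebra.of ℂ _ (t ^ j) →
    (delocTraceFin 1 x = 1 - (m : ℂ)⁻¹ - (n : ℂ)⁻¹) ∧
    (∀ a : Multiplicative (ZMod m), a ≠ 1 →
      delocTraceFin (Monoid.Coprod.inl a) x =
        -(((Finset.univ.filter (fun b : Multiplicative (ZMod m) =>
            IsConj (Monoid.Coprod.inl a : Multiplicative (ZMod m) ∗ Multiplicative (ZMod n))
              (Monoid.Coprod.inl b))).card : ℂ)) / m) ∧
    (∀ a : Multiplicative (ZMod n), a ≠ 1 →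
      delocTraceFin (Monoid.Coprod.inr a) x =
        -(((Finset.univ.filter (fun b : Multiplicative (ZMod n) =>
            IsConj (Monoid.Coprod.inr a : Multiplicative (ZMod m) ∗ Multiplicative (ZMod n))
              (Monoid.Coprod.inr b))).card : ℂ)) / n) ∧
    (∀ g : Multiplicative (ZMod m) ∗ Multiplicative (ZMod n),
      (∀ a : Multiplicative (ZMod m), ¬ IsConj g (Monoid.Coprod.inl a)) →
      (∀ a : Multiplicative (ZMod n), ¬ IsConj g (Monoid.Coprod.inr a)) →
      delocTraceFin g x = 0) := by
  intro s t hs ht x hx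
  -- basic conjugacy/equality facts between factors
  have conj_lr : ∀ (a : Multiplicative (ZMod m)) (b : Multiplicative (ZMod n)),
      IsConj (Monoid.Coprod.inl a : Multiplicative (ZMod m) ∗ Multiplicative (ZMod n))
        (Monoid.Coprod.inr b) → a = 1 := by
    intro a b h
    have := (Monoid.Coprod.fst).map_isConj h
    simpa [isConj_iff_eq] using this
  have conj_rl : ∀ (a : Multiplicative (ZMod n)) (b : Multiplicative (ZMod m)),
      IsConj (Monoid.Coprod.inr a : Multiplicative (ZMod m) ∗ Multiplicative (ZMod n))
        (Monoid.Coprod.inl b) → a = 1 := by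
    intro a b h
    have := (Monoid.Coprod.snd).map_isConj h
    simpa [isConj_iff_eq] using this
  have eq_lr : ∀ (a : Multiplicative (ZMod m)) (b : Multiplicative (ZMod n)),
      (Monoid.Coprod.inl a : Multiplicative (ZMod m) ∗ Multiplicative (ZMod n))
        = Monoid.Coprod.inr b → a = 1 := by
    intro a b h
    have := congrArg (fun z => Monoid.Coprod.fst z) h
    simpa using this
  have one_eq_inl : (1 : Multiplicative (ZMod m) ∗ Multiplicative (ZMod n))
      = Monoid.Coprod.inl 1 := (map_one _).symm
  have one_eq_inr : (1 : Multiplicative (ZMod m) ∗ Multiplicative (ZMod n))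
      = Monoid.Coprod.inr 1 := (map_one _).symm
  have inl_eq_one : ∀ a : Multiplicative (ZMod m),
      (Monoid.Coprod.inl a : Multiplicative (ZMod m) ∗ Multiplicative (ZMod n)) = 1 → a = 1 :=
    fun a e => Monoid.Coprod.inl_injective (e.trans one_eq_inl)
  have inr_eq_one : ∀ b : Multiplicative (ZMod n),
      (Monoid.Coprod.inr b : Multiplicative (ZMod m) ∗ Multiplicative (ZMod n)) = 1 → b = 1 :=
    fun b e => Monoid.Coprod.inr_injective (e.trans one_eq_inr)
  have hm0 : ((m : ℂ))⁻¹ ≠ 0 := inv_ne_zero (Nat.cast_ne_zero.mpr (NeZero.ne m))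
  have hn0 : ((n : ℂ))⁻¹ ≠ 0 := inv_ne_zero (Nat.cast_ne_zero.mpr (NeZero.ne n))
  have hc0 : (1 : ℂ) - (m : ℂ)⁻¹ - (n : ℂ)⁻¹ ≠ 0 := by
    have h2 : (m : ℝ)⁻¹ ≤ 2⁻¹ := by
      apply inv_anti₀ (by norm_num)
      exact_mod_cast hm
    have h3 : (n : ℝ)⁻¹ ≤ 3⁻¹ := by
      apply inv_anti₀ (by norm_num)
      exact_mod_cast hn
    have hr : (0 : ℝ) < 1 - (m : ℝ)⁻¹ - (n : ℝ)⁻¹ := by nlinarith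
    have hcast : ((1 - (m : ℝ)⁻¹ - (n : ℝ)⁻¹ : ℝ) : ℂ) = 1 - (m : ℂ)⁻¹ - (n : ℂ)⁻¹ := by
      push_cast
      ring
    rw [← hcast]
    exact Complex.ofReal_ne_zero.mpr (ne_of_gt hr)
  -- coefficient formula
  have hxcoef : ∀ h : Multiplicative (ZMod m) ∗ Multiplicative (ZMod n), x.coeff h =
      if h = 1 then 1 - (m : ℂ)⁻¹ - (n : ℂ)⁻¹
      else if ∃ a, h = Monoid.Coprod.inl a then -(m : ℂ)⁻¹
      else if ∃ b, h = Monoid.Coprod.inr b then -(n : ℂ)⁻¹ else 0 := by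
    intro h
    have h1 : x.coeff h = (if (1 : Multiplicative (ZMod m) ∗ Multiplicative (ZMod n)) = h
          then (1 : ℂ) else 0)
        - (m : ℂ)⁻¹ * (if ∃ a, h = Monoid.Coprod.inl a then 1 else 0)
        - (n : ℂ)⁻¹ * (if ∃ b, h = Monoid.Coprod.inr b then 1 else 0) := by
      rw [hx, hs, ht]
      rw [MonoidAlgebra.coeff_sub, MonoidAlgebra.coeff_sub, Finsupp.sub_apply, Finsupp.sub_apply,
        MonoidAlgebra.coeff_smul, MonoidAlgebra.coeff_smul, Finsupp.smul_apply, Finsupp.smul_apply]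
      rw [key_sum_gen m Monoid.Coprod.inl Monoid.Coprod.inl_injective h,
          key_sum_gen n Monoid.Coprod.inr Monoid.Coprod.inr_injective h]
      rw [MonoidAlgebra.one_def, MonoidAlgebra.coeff_single, Finsupp.single_apply]
      simp [smul_eq_mul]
    rw [h1]
    by_cases h0 : h = 1
    · subst h0
      rw [if_pos rfl, if_pos rfl, if_pos ⟨1, one_eq_inl⟩, if_pos ⟨1, one_eq_inr⟩]
      ring
    · rw [if_neg (fun e => h0 e.symm), if_neg h0]
      by_cases hA : ∃ a, h = Monoid.Coprod.inl a
      · rw [if_pos hA, if_pos hA]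
        have hB : ¬ ∃ b, h = Monoid.Coprod.inr b := by
          rintro ⟨b, rfl⟩
          obtain ⟨a, ha⟩ := hA
          have ha1 : a = 1 := eq_lr a b ha.symm
          exact h0 (by rw [ha, ha1, map_one])
        rw [if_neg hB]
        ring
      · rw [if_neg hA, if_neg hA]
        by_cases hB : ∃ b, h = Monoid.Coprod.inr b
        · rw [if_pos hB, if_pos hB]
          ring
        · rw [if_neg hB, if_neg hB]
          ring
  -- support characterization
  have hsupp : ∀ h ∈ x.coeff.support,
      (∃ a, h = Monoid.Coprod.inl a) ∨ (∃ b, h = Monoid.Coprod.inr b) := by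
    intro h hh
    by_contra hcon
    push_neg at hcon
    have hne := Finsupp.mem_support_iff.mp hh
    have hA : ¬ ∃ a, h = Monoid.Coprod.inl a := by
      rintro ⟨a, ha⟩; exact hcon.1 a ha
    have hB : ¬ ∃ b, h = Monoid.Coprod.inr b := by
      rintro ⟨b, hb⟩; exact hcon.2 b hb
    have h0 : h ≠ 1 := by
      rintro rfl
      exact hA ⟨1, one_eq_inl⟩
    rw [hxcoef h, if_neg h0, if_neg hA, if_neg hB] at hne
    exact hne rfl
  have hxinl : ∀ a : Multiplicative (ZMod m), a ≠ 1 →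
      x.coeff (Monoid.Coprod.inl a) = -(m : ℂ)⁻¹ := by
    intro a ha
    have hne1 : (Monoid.Coprod.inl a : Multiplicative (ZMod m) ∗ Multiplicative (ZMod n)) ≠ 1 :=
      fun e => ha (inl_eq_one a e)
    rw [hxcoef, if_neg hne1, if_pos ⟨a, rfl⟩]
  have hxinr : ∀ b : Multiplicative (ZMod n), b ≠ 1 →
      x.coeff (Monoid.Coprod.inr b) = -(n : ℂ)⁻¹ := by
    intro b hb
    have hne1 : (Monoid.Coprod.inr b : Multiplicative (ZMod m) ∗ Multiplicative (ZMod n)) ≠ 1 :=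
      fun e => hb (inr_eq_one b e)
    have hA : ¬ ∃ a, (Monoid.Coprod.inr b : Multiplicative (ZMod m) ∗ Multiplicative (ZMod n))
        = Monoid.Coprod.inl a := by
      rintro ⟨a, ha⟩
      have := eq_lr a b ha.symm
      exact hne1 (by rw [ha, this, map_one])
    rw [hxcoef, if_neg hne1, if_neg hA, if_pos ⟨b, rfl⟩]
  refine ⟨?_, ?_, ?_, ?_⟩
  · -- trivial class
    have hfilt1 : x.coeff.support.filter
        (fun h => IsConj (1 : Multiplicative (ZMod m) ∗ Multiplicative (ZMod n)) h) = {1} := by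
      ext h
      simp only [Finset.mem_filter, Finset.mem_singleton, Finsupp.mem_support_iff]
      constructor
      · rintro ⟨_, hc⟩
        exact isConj_one_right.mp hc
      · rintro rfl
        refine ⟨?_, IsConj.refl 1⟩
        rw [hxcoef 1, if_pos rfl]
        exact hc0
    rw [delocTraceFin, hfilt1, Finset.sum_singleton, hxcoef 1, if_pos rfl]
  · -- class of inl a
    intro a ha
    have hfilt : x.coeff.support.filter (fun h => IsConj (Monoid.Coprod.inl a) h)
        = (Finset.univ.filter (fun b : Multiplicative (ZMod m) =>
            IsConj (Monoid.Coprod.inl a : Multiplicative (ZMod m) ∗ Multiplicative (ZMod n))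
              (Monoid.Coprod.inl b))).image (fun b => Monoid.Coprod.inl b) := by
      ext h
      simp only [Finset.mem_filter, Finset.mem_image, Finset.mem_univ, true_and,
        Finsupp.mem_support_iff]
      constructor
      · rintro ⟨hne, hc⟩
        rcases hsupp h (Finsupp.mem_support_iff.mpr hne) with ⟨b, rfl⟩ | ⟨b, rfl⟩
        · exact ⟨b, hc, rfl⟩
        · exact absurd (conj_lr a b hc) ha
      · rintro ⟨b, hb, rfl⟩
        refine ⟨?_, hb⟩
        have hb1 : b ≠ 1 := by
          rintro rfl
          rw [← one_eq_inl] at hb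
          exact ha (inl_eq_one a (isConj_one_left.mp hb))
        rw [hxinl b hb1]
        exact neg_ne_zero.mpr hm0
    rw [delocTraceFin, hfilt,
      Finset.sum_image (fun _ _ _ _ e => Monoid.Coprod.inl_injective e)]
    have hconst : ∀ b ∈ Finset.univ.filter (fun b : Multiplicative (ZMod m) =>
        IsConj (Monoid.Coprod.inl a : Multiplicative (ZMod m) ∗ Multiplicative (ZMod n))
          (Monoid.Coprod.inl b)),
        x.coeff (Monoid.Coprod.inl b) = -(m : ℂ)⁻¹ := by
      intro b hb
      rw [Finset.mem_filter] at hb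
      refine hxinl b ?_
      rintro rfl
      have := hb.2
      rw [← one_eq_inl] at this
      exact ha (inl_eq_one a (isConj_one_left.mp this))
    rw [Finset.sum_congr rfl hconst, Finset.sum_const, nsmul_eq_mul, neg_div,
      div_eq_mul_inv]
    ring
  · -- class of inr a
    intro a ha
    have hfilt : x.coeff.support.filter (fun h => IsConj (Monoid.Coprod.inr a) h)
        = (Finset.univ.filter (fun b : Multiplicative (ZMod n) =>
            IsConj (Monoid.Coprod.inr a : Multiplicative (ZMod m) ∗ Multiplicative (ZMod n))
              (Monoid.Coprod.inr b))).image (fun b => Monoid.Coprod.inr b) := by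
      ext h
      simp only [Finset.mem_filter, Finset.mem_image, Finset.mem_univ, true_and,
        Finsupp.mem_support_iff]
      constructor
      · rintro ⟨hne, hc⟩
        rcases hsupp h (Finsupp.mem_support_iff.mpr hne) with ⟨b, rfl⟩ | ⟨b, rfl⟩
        · exact absurd (conj_rl a b hc) ha
        · exact ⟨b, hc, rfl⟩
      · rintro ⟨b, hb, rfl⟩
        refine ⟨?_, hb⟩
        have hb1 : b ≠ 1 := by
          rintro rfl
          rw [← one_eq_inr] at hb
          exact ha (inr_eq_one a (isConj_one_left.mp hb))
        rw [hxinr b hb1]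
        exact neg_ne_zero.mpr hn0
    rw [delocTraceFin, hfilt,
      Finset.sum_image (fun _ _ _ _ e => Monoid.Coprod.inr_injective e)]
    have hconst : ∀ b ∈ Finset.univ.filter (fun b : Multiplicative (ZMod n) =>
        IsConj (Monoid.Coprod.inr a : Multiplicative (ZMod m) ∗ Multiplicative (ZMod n))
          (Monoid.Coprod.inr b)),
        x.coeff (Monoid.Coprod.inr b) = -(n : ℂ)⁻¹ := by
      intro b hb
      rw [Finset.mem_filter] at hb
      refine hxinr b ?_
      rintro rfl
      have := hb.2
      rw [← one_eq_inr] at this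
      exact ha (inr_eq_one a (isConj_one_left.mp this))
    rw [Finset.sum_congr rfl hconst, Finset.sum_const, nsmul_eq_mul, neg_div,
      div_eq_mul_inv]
    ring
  · -- other classes
    intro g hg1 hg2
    have hempty : x.coeff.support.filter (fun h => IsConj g h) = ∅ := by
      rw [Finset.eq_empty_iff_forall_notMem]
      intro h hh
      rw [Finset.mem_filter] at hh
      rcases hsupp h hh.1 with ⟨b, rfl⟩ | ⟨b, rfl⟩
      · exact hg1 b hh.2
      · exact hg2 b hh.2
    rw [delocTraceFin, hempty, Finset.sum_empty]
end

section
/- Let G = ℤ_m * ℤ_n with generators s, t of orders m, n. In ℂ[G], let p = (1/m)∑_{i<m}s^i and q = (1/n)∑_{j<n}t^j. Then p·q ≠ q·p unless in the degenerate case, and the images of p and q acting on ℓ²(G) by left convolution satisfy range(p) ∩ range(q) = {0}. -/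
open scoped Monoid.Coprod

namespace AvgAux

/-! ### A homomorphism out of `Multiplicative (ZMod m)` from an element of order dividing `m` -/

noncomputable def zmodHom {H : Type*} [Group H] (m : ℕ) (a : H) (ha : a ^ m = 1) :
    Multiplicative (ZMod m) →* H :=
  AddMonoidHom.toMultiplicativeLeft
    (ZMod.lift m ⟨(zmultiplesHom (Additive H)) (Additive.ofMul a), by
      simp [zpow_natCast, ← ofMul_pow, ha]⟩)

theorem zmodHom_natCast {H : Type*} [Group H] (m : ℕ) (a : H) (ha : a ^ m = 1) (k : ℕ) :
    zmodHom m a ha (Multiplicative.ofAdd ((k : ℕ) : ZMod m)) = a ^ k := by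
  have h : ((k : ℕ) : ZMod m) = ((k : ℤ) : ZMod m) := by push_cast; ring
  rw [zmodHom, h]
  rw [AddMonoidHom.toMultiplicativeLeft_apply_apply, toAdd_ofAdd, ZMod.lift_coe]
  simp [← ofMul_zpow]

theorem zmodHom_one {H : Type*} [Group H] (m : ℕ) (a : H) (ha : a ^ m = 1) :
    zmodHom m a ha (Multiplicative.ofAdd (1 : ZMod m)) = a := by
  have := zmodHom_natCast m a ha 1
  simpa using this

/-! ### Averaging fixed points are translation invariant -/

theorem shift_of_avg_fixed {G : Type*} [Group G] (f : G → ℂ) (m : ℕ) (hm : m ≠ 0) (s : G)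
    (hsm : s ^ m = 1)
    (havg : ∀ h, ((m : ℂ))⁻¹ • ∑ i ∈ Finset.range m, f ((s ^ i)⁻¹ * h) = f h) :
    ∀ h, f (s * h) = f h := by
  intro h
  obtain ⟨m', rfl⟩ : ∃ m', m = m' + 1 := ⟨m - 1, by omega⟩
  have hsum : ∑ i ∈ Finset.range (m' + 1), f ((s ^ i)⁻¹ * (s * h))
      = ∑ i ∈ Finset.range (m' + 1), f ((s ^ i)⁻¹ * h) := by
    rw [Finset.sum_range_succ' (fun i => f ((s ^ i)⁻¹ * (s * h)))]
    rw [Finset.sum_range_succ (fun i => f ((s ^ i)⁻¹ * h))]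
    have h1 : ∀ i : ℕ, (s ^ (i + 1))⁻¹ * (s * h) = (s ^ i)⁻¹ * h := by
      intro i
      rw [pow_succ' s i]
      group
    have h2 : (s ^ m')⁻¹ * h = s * h := by
      have hinv : (s ^ m')⁻¹ = s := by
        rw [inv_eq_iff_mul_eq_one, ← pow_succ]; exact hsm
      rw [hinv]
    simp only [h1, pow_zero, inv_one, one_mul, h2]
  rw [← havg (s * h), hsum, havg h]

/-! ### The finite permutation representation used for non-commutativity -/

variable (m n : ℕ)

def pA : Equiv.Perm (ZMod m × ZMod n) :=
  (Equiv.addLeft (1 : ZMod m)).prodCongr (Equiv.refl (ZMod n))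

def pB : Equiv.Perm (ZMod m × ZMod n) :=
  Equiv.prodShear (Equiv.refl (ZMod m))
    (fun x => Equiv.addRight (if x = 0 then (1 : ZMod n) else 0))

theorem pA_pow_apply (i : ℕ) (x : ZMod m) (y : ZMod n) :
    ((pA m n) ^ i) (x, y) = (x + i, y) := by
  induction i with
  | zero => simp
  | succ i ih =>
    rw [pow_succ', Equiv.Perm.mul_apply, ih]
    simp only [pA, Equiv.prodCongr_apply, Prod.map, Equiv.coe_addLeft, Equiv.refl_apply]
    rw [Prod.mk.injEq]
    constructor
    · push_cast; ring
    · rfl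

theorem pB_pow_apply (j : ℕ) (x : ZMod m) (y : ZMod n) :
    ((pB m n) ^ j) (x, y) = (x, y + (j : ZMod n) * (if x = 0 then 1 else 0)) := by
  induction j with
  | zero => simp
  | succ j ih =>
    rw [pow_succ', Equiv.Perm.mul_apply, ih]
    simp only [pB, Equiv.prodShear_apply, Equiv.refl_apply, Equiv.coe_addRight]
    rw [Prod.mk.injEq]
    refine ⟨rfl, ?_⟩
    push_cast; ring

theorem pA_pow_m : (pA m n) ^ m = 1 := by
  ext1 z
  obtain ⟨x, y⟩ := z
  rw [pA_pow_apply]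
  simp [ZMod.natCast_self]

theorem pB_pow_n : (pB m n) ^ n = 1 := by
  ext1 z
  obtain ⟨x, y⟩ := z
  rw [pB_pow_apply]
  simp [ZMod.natCast_self]

theorem keyAB (hm : 2 ≤ m) (hn : 2 ≤ n) [NeZero m] [NeZero n] {i j : ℕ} (hi : i < m)
    (hj : j < n) :
    (pA m n) ^ i * (pB m n) ^ j = pA m n * pB m n ↔ i = 1 ∧ j = 1 := by
  haveI : Fact (1 < m) := ⟨by omega⟩
  haveI : Fact (1 < n) := ⟨by omega⟩
  constructor
  · intro h
    have h0 := congrArg (fun σ : Equiv.Perm (ZMod m × ZMod n) => σ (0, 0)) h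
    simp only [Equiv.Perm.mul_apply] at h0
    rw [pB_pow_apply, pA_pow_apply] at h0
    have hB1 : pB m n (0, 0) = ((0 : ZMod m), (1 : ZMod n)) := by
      simp [pB]
    rw [hB1] at h0
    have hA1 : pA m n ((0 : ZMod m), (1 : ZMod n)) = (1, 1) := by
      simp [pA]
    rw [hA1] at h0
    simp only [eq_self_iff_true, if_true, mul_one, zero_add, Prod.mk.injEq] at h0
    obtain ⟨h1, h2⟩ := h0
    constructor
    · have := congrArg ZMod.val h1
      rwa [ZMod.val_cast_of_lt hi, ZMod.val_one] at this
    · have := congrArg ZMod.val h2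
      rwa [ZMod.val_cast_of_lt hj, ZMod.val_one] at this
  · rintro ⟨rfl, rfl⟩
    rw [pow_one, pow_one]

theorem keyBA (hm : 2 ≤ m) (hn : 2 ≤ n) [NeZero m] [NeZero n] (i j : ℕ) :
    (pB m n) ^ j * (pA m n) ^ i ≠ pA m n * pB m n := by
  haveI : Fact (1 < m) := ⟨by omega⟩
  haveI : Fact (1 < n) := ⟨by omega⟩
  intro h
  have h0 := congrArg (fun σ : Equiv.Perm (ZMod m × ZMod n) => σ (0, 0)) h
  simp only [Equiv.Perm.mul_apply] at h0
  rw [pA_pow_apply, pB_pow_apply] at h0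
  have hB1 : pB m n (0, 0) = ((0 : ZMod m), (1 : ZMod n)) := by simp [pB]
  have hA1 : pA m n ((0 : ZMod m), (1 : ZMod n)) = (1, 1) := by simp [pA]
  rw [hB1, hA1] at h0
  simp only [zero_add, Prod.mk.injEq] at h0
  obtain ⟨h1, h2⟩ := h0
  rw [h1, if_neg (one_ne_zero : (1 : ZMod m) ≠ 0), mul_zero] at h2
  exact one_ne_zero h2.symm

/-! ### The infinite representation by affine maps of `ℂ` -/

noncomputable section

variable {ζ ω : ℂ}

def rA (hζ : ζ ≠ 0) : Equiv.Perm ℂ := Equiv.mulLeft₀ ζ hζ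

def rB (hω : ω ≠ 0) : Equiv.Perm ℂ :=
  (Equiv.addLeft (1 : ℂ)) * (Equiv.mulLeft₀ ω hω) * (Equiv.addLeft (1 : ℂ))⁻¹

theorem rA_pow_apply (hζ : ζ ≠ 0) (i : ℕ) (x : ℂ) : ((rA hζ) ^ i) x = ζ ^ i * x := by
  induction i with
  | zero => simp
  | succ i ih =>
    rw [pow_succ', Equiv.Perm.mul_apply, ih, rA]
    simp only [Equiv.mulLeft₀_apply]
    ring

theorem rB_apply (hω : ω ≠ 0) (x : ℂ) : (rB hω) x = ω * (x - 1) + 1 := by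
  simp only [rB, Equiv.Perm.mul_apply, Equiv.Perm.inv_def, Equiv.addLeft_symm,
    Equiv.coe_addLeft, Equiv.mulLeft₀_apply]
  ring

theorem rB_pow_apply (hω : ω ≠ 0) (j : ℕ) (x : ℂ) :
    ((rB hω) ^ j) x = ω ^ j * (x - 1) + 1 := by
  induction j with
  | zero => simp
  | succ j ih =>
    rw [pow_succ', Equiv.Perm.mul_apply, ih, rB_apply hω]
    ring

theorem rA_pow_eq_one (hζ : ζ ≠ 0) {k : ℕ} (hk : ζ ^ k = 1) : (rA hζ) ^ k = 1 := by
  ext1 x; rw [rA_pow_apply, hk]; simp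

theorem rB_pow_eq_one (hω : ω ≠ 0) {k : ℕ} (hk : ω ^ k = 1) : (rB hω) ^ k = 1 := by
  ext1 x; rw [rB_pow_apply, hk]; simp

theorem rA_inv_apply (hζ : ζ ≠ 0) (x : ℂ) : (rA hζ)⁻¹ x = ζ⁻¹ * x := by
  rw [Equiv.Perm.inv_def, rA]
  simp [Equiv.mulLeft₀_symm_apply]

theorem rB_inv_apply (hω : ω ≠ 0) (x : ℂ) : (rB hω)⁻¹ x = ω⁻¹ * (x - 1) + 1 := by
  set y := (rB hω)⁻¹ x with hy
  have h := rB_apply hω y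
  rw [hy, show (rB hω) ((rB hω)⁻¹ x) = x from (rB hω).apply_symm_apply x] at h
  rw [← hy] at h
  field_simp
  linear_combination -h

theorem comm_apply (hζ : ζ ≠ 0) (hω : ω ≠ 0) (x : ℂ) :
    ((rA hζ) * (rB hω) * (rA hζ)⁻¹ * (rB hω)⁻¹) x = x + (1 - ζ) * (ω - 1) := by
  simp only [Equiv.Perm.mul_apply]
  rw [rB_inv_apply, rA_inv_apply, rB_apply]
  rw [show ((rA hζ) : Equiv.Perm ℂ) = (rA hζ) ^ 1 by rw [pow_one], rA_pow_apply, pow_one]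
  field_simp
  ring

theorem comm_pow_apply (hζ : ζ ≠ 0) (hω : ω ≠ 0) (k : ℕ) (x : ℂ) :
    (((rA hζ) * (rB hω) * (rA hζ)⁻¹ * (rB hω)⁻¹) ^ k) x = x + k * ((1 - ζ) * (ω - 1)) := by
  induction k with
  | zero => simp
  | succ k ih =>
    rw [pow_succ', Equiv.Perm.mul_apply, ih, comm_apply]
    push_cast; ring

end

/-! ### Coefficient extraction in the monoid algebra -/

theorem coeff_prod {G H : Type*} [Group G] [Group H] [DecidableEq H] (φ : G →* H) (m n : ℕ)
    (u v : G) (g₀ : H) (x y : MonoidAlgebra ℂ G)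
    (hx : x = ((m : ℂ))⁻¹ • ∑ i ∈ Finset.range m, MonoidAlgebra.of ℂ G (u ^ i))
    (hy : y = ((n : ℂ))⁻¹ • ∑ j ∈ Finset.range n, MonoidAlgebra.of ℂ G (v ^ j)) :
    (MonoidAlgebra.mapDomainRingHom ℂ φ (x * y)).coeff g₀
      = (m : ℂ)⁻¹ * ((n : ℂ)⁻¹ * ∑ i ∈ Finset.range m, ∑ j ∈ Finset.range n,
          (if (φ u) ^ i * (φ v) ^ j = g₀ then (1 : ℂ) else 0)) := by
  classical
  subst hx hy
  rw [map_mul]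
  have hmap : ∀ (N : ℕ) (w : G),
      MonoidAlgebra.mapDomainRingHom ℂ φ
          (((N : ℂ))⁻¹ • ∑ i ∈ Finset.range N, MonoidAlgebra.of ℂ G (w ^ i))
        = ((N : ℂ))⁻¹ • ∑ i ∈ Finset.range N, MonoidAlgebra.single ((φ w) ^ i) (1 : ℂ) := by
    intro N w
    have hrfl : ∀ z : MonoidAlgebra ℂ G,
        MonoidAlgebra.mapDomainRingHom ℂ φ z = MonoidAlgebra.mapDomain φ z := fun _ => rfl
    rw [hrfl, MonoidAlgebra.mapDomain_smul, ← hrfl, map_sum]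
    congr 1
    refine Finset.sum_congr rfl fun i _ => ?_
    rw [hrfl, MonoidAlgebra.of_apply, MonoidAlgebra.mapDomain_single, map_pow]
  rw [hmap m u, hmap n v, smul_mul_assoc, mul_smul_comm, Finset.sum_mul_sum]
  rw [MonoidAlgebra.coeff_smul_apply, MonoidAlgebra.coeff_smul_apply, smul_eq_mul, smul_eq_mul]
  congr 2
  rw [MonoidAlgebra.coeff_sum, Finset.sum_apply']
  refine Finset.sum_congr rfl fun i _ => ?_
  rw [MonoidAlgebra.coeff_sum, Finset.sum_apply']
  refine Finset.sum_congr rfl fun j _ => ?_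
  rw [MonoidAlgebra.single_mul_single, one_mul, MonoidAlgebra.coeff_single, Finsupp.single_apply]

theorem ofAdd_one_pow (m : ℕ) (k : ℕ) :
    (Multiplicative.ofAdd (1 : ZMod m)) ^ k = Multiplicative.ofAdd ((k : ZMod m)) := by
  rw [← ofAdd_nsmul]
  congr 1
  simp [nsmul_eq_mul]

end AvgAux

/-- For `G = ℤ_m ∗ ℤ_n` (`m ≥ 2`, `n ≥ 3`) with generators `s, t`, and the averaging
idempotents `p = (1/m)∑_{i<m} s^i`, `q = (1/n)∑_{j<n} t^j` in `ℂ[G]`: `p` and `q` do not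
commute, and acting on `ℓ²(G)` by left convolution, `range p ∩ range q = {0}` — i.e. any
`ℓ²`-function fixed by the `s`-averaging operator and by the `t`-averaging operator is `0`. -/
theorem averaging_idempotents_ranges_intersect_trivially (m n : ℕ) [NeZero m] [NeZero n]
    (hm : 2 ≤ m) (hn : 3 ≤ n)
    (s t : Multiplicative (ZMod m) ∗ Multiplicative (ZMod n))
    (hs : s = Monoid.Coprod.inl (Multiplicative.ofAdd (1 : ZMod m)))
    (ht : t = Monoid.Coprod.inr (Multiplicative.ofAdd (1 : ZMod n)))
    (p q : MonoidAlgebra ℂ (Multiplicative (ZMod m) ∗ Multiplicative (ZMod n)))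
    (hp : p = ((m : ℂ))⁻¹ • ∑ i ∈ Finset.range m, MonoidAlgebra.of ℂ _ (s ^ i))
    (hq : q = ((n : ℂ))⁻¹ • ∑ j ∈ Finset.range n, MonoidAlgebra.of ℂ _ (t ^ j)) :
    p * q ≠ q * p ∧
    ∀ f : (Multiplicative (ZMod m) ∗ Multiplicative (ZMod n)) → ℂ,
      Memℓp f 2 →
      (∀ h, ((m : ℂ))⁻¹ • ∑ i ∈ Finset.range m, f ((s ^ i)⁻¹ * h) = f h) →
      (∀ h, ((n : ℂ))⁻¹ • ∑ j ∈ Finset.range n, f ((t ^ j)⁻¹ * h) = f h) →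
      f = 0 := by
  classical
  have hs_pow : ∀ k : ℕ, s ^ k = Monoid.Coprod.inl (Multiplicative.ofAdd ((k : ZMod m))) := by
    intro k
    rw [hs, ← map_pow, AvgAux.ofAdd_one_pow]
  have ht_pow : ∀ k : ℕ, t ^ k = Monoid.Coprod.inr (Multiplicative.ofAdd ((k : ZMod n))) := by
    intro k
    rw [ht, ← map_pow, AvgAux.ofAdd_one_pow]
  have hsm : s ^ m = 1 := by
    rw [hs_pow m, ZMod.natCast_self]
    simp
  have htn : t ^ n = 1 := by
    rw [ht_pow n, ZMod.natCast_self]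
    simp
  constructor
  · -- p * q ≠ q * p
    intro heq
    set a := AvgAux.pA m n with ha_def
    set b := AvgAux.pB m n with hb_def
    have ham : a ^ m = 1 := AvgAux.pA_pow_m m n
    have hbn : b ^ n = 1 := AvgAux.pB_pow_n m n
    set φ := Monoid.Coprod.lift (AvgAux.zmodHom m a ham) (AvgAux.zmodHom n b hbn) with hφ_def
    have hφs : φ s = a := by
      rw [hs, hφ_def, Monoid.Coprod.lift_apply_inl, AvgAux.zmodHom_one]
    have hφt : φ t = b := by
      rw [ht, hφ_def, Monoid.Coprod.lift_apply_inr, AvgAux.zmodHom_one]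
    have h1 := AvgAux.coeff_prod φ m n s t (a * b) p q hp hq
    have h2 := AvgAux.coeff_prod φ n m t s (a * b) q p hq hp
    rw [hφs, hφt] at h1 h2
    rw [heq, h2] at h1
    have hc1 : ∑ i ∈ Finset.range m, ∑ j ∈ Finset.range n,
        (if a ^ i * b ^ j = a * b then (1 : ℂ) else 0) = 1 := by
      have step : ∀ i ∈ Finset.range m, (∑ j ∈ Finset.range n,
          (if a ^ i * b ^ j = a * b then (1 : ℂ) else 0))
          = if i = 1 then 1 else 0 := by
        intro i hi
        have hi' := Finset.mem_range.1 hi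
        have inner : ∀ j ∈ Finset.range n, (if a ^ i * b ^ j = a * b then (1 : ℂ) else 0)
            = if i = 1 ∧ j = 1 then (1 : ℂ) else 0 := by
          intro j hj
          exact if_congr (AvgAux.keyAB m n hm (by omega) hi' (Finset.mem_range.1 hj)) rfl rfl
        rw [Finset.sum_congr rfl inner]
        by_cases h : i = 1
        · subst h
          have h1n : (1 : ℕ) ∈ Finset.range n := Finset.mem_range.2 (by omega)
          simp [Finset.sum_ite_eq' (Finset.range n) 1 (fun _ => (1 : ℂ)), h1n]
        · simp [h]
      have h1m : (1 : ℕ) ∈ Finset.range m := Finset.mem_range.2 (by omega)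
      rw [Finset.sum_congr rfl step]
      simp [Finset.sum_ite_eq' (Finset.range m) 1 (fun _ => (1 : ℂ)), h1m]
    have hc0 : ∑ j ∈ Finset.range n, ∑ i ∈ Finset.range m,
        (if b ^ j * a ^ i = a * b then (1 : ℂ) else 0) = 0 := by
      refine Finset.sum_eq_zero fun j _ => Finset.sum_eq_zero fun i _ => ?_
      rw [if_neg (AvgAux.keyBA m n hm (by omega) i j)]
    rw [hc1, hc0] at h1
    have hmne : (m : ℂ) ≠ 0 := Nat.cast_ne_zero.2 (NeZero.ne m)
    have hnne : (n : ℂ) ≠ 0 := Nat.cast_ne_zero.2 (NeZero.ne n)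
    rw [mul_zero, mul_zero, mul_one] at h1
    exact (mul_ne_zero (inv_ne_zero hmne) (inv_ne_zero hnne)) h1.symm
  · -- the ℓ² part
    intro f hf hP hQ
    have hfs : ∀ h, f (s * h) = f h :=
      AvgAux.shift_of_avg_fixed f m (NeZero.ne m) s hsm hP
    have hft : ∀ h, f (t * h) = f h :=
      AvgAux.shift_of_avg_fixed f n (NeZero.ne n) t htn hQ
    have hpow_s : ∀ (k : ℕ) (h), f (s ^ k * h) = f h := by
      intro k
      induction k with
      | zero => intro h; rw [pow_zero, one_mul]
      | succ k ih => intro h; rw [pow_succ', mul_assoc, hfs, ih]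
    have hpow_t : ∀ (k : ℕ) (h), f (t ^ k * h) = f h := by
      intro k
      induction k with
      | zero => intro h; rw [pow_zero, one_mul]
      | succ k ih => intro h; rw [pow_succ', mul_assoc, hft, ih]
    have hconst : ∀ g h, f (g * h) = f h := by
      intro g
      induction g using Monoid.Coprod.induction_on with
      | inl x =>
        intro h
        have hx : Monoid.Coprod.inl x = s ^ (Multiplicative.toAdd x).val := by
          rw [hs_pow, ZMod.natCast_zmod_val]
          simp
        rw [hx]
        exact hpow_s _ h
      | inr x =>
        intro h
        have hx : Monoid.Coprod.inr x = t ^ (Multiplicative.toAdd x).val := by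
          rw [ht_pow, ZMod.natCast_zmod_val]
          simp
        rw [hx]
        exact hpow_t _ h
      | mul x y hx hy =>
        intro h
        rw [mul_assoc, hx, hy]
    -- the group is infinite
    have hprimζ := Complex.isPrimitiveRoot_exp m (NeZero.ne m)
    have hprimω := Complex.isPrimitiveRoot_exp n (NeZero.ne n)
    set ζ := Complex.exp (2 * Real.pi * Complex.I / m) with hζ_def
    set ω := Complex.exp (2 * Real.pi * Complex.I / n) with hω_def
    have hζ0 : ζ ≠ 0 := Complex.exp_ne_zero _
    have hω0 : ω ≠ 0 := Complex.exp_ne_zero _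
    have hζ1 : ζ ≠ 1 := by
      intro h
      have hdvd := hprimζ.dvd_of_pow_eq_one 1 (by rw [h]; simp)
      have := Nat.le_of_dvd one_pos hdvd
      omega
    have hω1 : ω ≠ 1 := by
      intro h
      have hdvd := hprimω.dvd_of_pow_eq_one 1 (by rw [h]; simp)
      have := Nat.le_of_dvd one_pos hdvd
      omega
    set a2 := AvgAux.rA hζ0 with ha2_def
    set b2 := AvgAux.rB hω0 with hb2_def
    have ha2m : a2 ^ m = 1 := AvgAux.rA_pow_eq_one hζ0 hprimζ.pow_eq_one
    have hb2n : b2 ^ n = 1 := AvgAux.rB_pow_eq_one hω0 hprimω.pow_eq_one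
    set ψ := Monoid.Coprod.lift (AvgAux.zmodHom m a2 ha2m) (AvgAux.zmodHom n b2 hb2n)
      with hψ_def
    have hψs : ψ s = a2 := by
      rw [hs, hψ_def, Monoid.Coprod.lift_apply_inl, AvgAux.zmodHom_one]
    have hψt : ψ t = b2 := by
      rw [ht, hψ_def, Monoid.Coprod.lift_apply_inr, AvgAux.zmodHom_one]
    have hv : (1 - ζ) * (ω - 1) ≠ 0 :=
      mul_ne_zero (sub_ne_zero.2 (Ne.symm hζ1)) (sub_ne_zero.2 hω1)
    haveI hGinf : Infinite (Multiplicative (ZMod m) ∗ Multiplicative (ZMod n)) := by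
      refine Infinite.of_injective (fun k : ℕ => (s * t * s⁻¹ * t⁻¹) ^ k) ?_
      intro k l hkl
      simp only at hkl
      have h1 : (a2 * b2 * a2⁻¹ * b2⁻¹) ^ k = (a2 * b2 * a2⁻¹ * b2⁻¹) ^ l := by
        have hcomm : ψ (s * t * s⁻¹ * t⁻¹) = a2 * b2 * a2⁻¹ * b2⁻¹ := by
          simp only [map_mul, map_inv, hψs, hψt]
        calc (a2 * b2 * a2⁻¹ * b2⁻¹) ^ k = ψ ((s * t * s⁻¹ * t⁻¹) ^ k) := by
              rw [map_pow, hcomm]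
          _ = ψ ((s * t * s⁻¹ * t⁻¹) ^ l) := by rw [hkl]
          _ = (a2 * b2 * a2⁻¹ * b2⁻¹) ^ l := by rw [map_pow, hcomm]
      have h2 := congrArg (fun σ : Equiv.Perm ℂ => σ 0) h1
      simp only [ha2_def, hb2_def, AvgAux.comm_pow_apply hζ0 hω0] at h2
      field_simp [hv] at h2
      have h3 : ((k : ℂ) - l) * ((1 - ζ) * (ω - 1)) = 0 := by linear_combination h2
      exact_mod_cast sub_eq_zero.1 ((mul_eq_zero.1 h3).resolve_right hv)
    -- f is constant, and a constant ℓ² function on an infinite set is zero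
    have hfconst : ∀ g, f g = f 1 := by
      intro g
      have := hconst g 1
      rwa [mul_one] at this
    have hsum := hf.summable (p := 2) (by norm_num)
    have hsum' : Summable (fun _ : Multiplicative (ZMod m) ∗ Multiplicative (ZMod n) =>
        ‖f 1‖ ^ ((2 : ENNReal).toReal)) := by
      have hfun : (fun g : Multiplicative (ZMod m) ∗ Multiplicative (ZMod n) =>
          ‖f g‖ ^ ((2 : ENNReal).toReal))
          = fun _ => ‖f 1‖ ^ ((2 : ENNReal).toReal) := funext fun g => by rw [hfconst]
      rwa [hfun] at hsum
    have h0 : ‖f 1‖ ^ ((2 : ENNReal).toReal) = 0 :=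
      tendsto_nhds_unique tendsto_const_nhds hsum'.tendsto_cofinite_zero
    have hf1 : f 1 = 0 := by
      have h2' : ‖f 1‖ ^ (2 : ℝ) = 0 := by
        simpa using h0
      rw [show (2 : ℝ) = ((2 : ℕ) : ℝ) by norm_num, Real.rpow_natCast] at h2'
      have := pow_eq_zero_iff (n := 2) (by norm_num) |>.mp h2'
      exact norm_eq_zero.mp this
    funext g
    rw [hfconst g, hf1]
    rfl
end
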